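/- Let X₁, X₂ be independent random variables each with the logistic distribution (density f(x) = e^{-x}/(1+e^{-x})²). Then ∫_{0}^{∞} x · P(X₁ + X₂ > x) dx = π²/6. -/

import Mathlib

/-!
Conditioning on `X₁`, `P(X₁ + X₂ > s) = ∫ f(a) / (1 + e^(s-a)) da`. With `u = e^a` the integrand
is rational in `u`, and partial fractions give `T(s) = (s e^s - e^s + 1) / (e^s - 1)²` for `s ≠ 0`.
For `s > 0`, `s T(s) = s² e^s / (e^s - 1)² - s / (e^s - 1)`; expanding both terms in powers of
`e^(-s)` and integrating termwise (`∫₀^∞ sᵏ e^(-ns) ds = k! / n^(k+1)`) gives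
`2 ζ(2) - ζ(2) = π² / 6`.
-/

open MeasureTheory ProbabilityTheory Real Set Filter
open scoped Topology ENNReal Nat

theorem ProbabilityTheory.IndepFun.measure_setOf_lt_add {Ω : Type*} [MeasurableSpace Ω]
    {μ : Measure Ω} [IsFiniteMeasure μ] {X Y : Ω → ℝ} (hX : Measurable X) (hY : Measurable Y)
    (hXY : IndepFun X Y μ) (s : ℝ) :
    μ {ω | s < X ω + Y ω} = ((μ.map X).prod (μ.map Y)) {p | s < p.1 + p.2} := by
  rw [← (indepFun_iff_map_prod_eq_prod_map_map hX.aemeasurable hY.aemeasurable).1 hXY,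
    Measure.map_apply (hX.prodMk hY) (s := {p : ℝ × ℝ | s < p.1 + p.2})
      (measurableSet_lt measurable_const (measurable_fst.add measurable_snd))]
  rfl

theorem integrable_of_hasDerivAt_of_nonneg {f f' : ℝ → ℝ} {m n : ℝ}
    (hderiv : ∀ x, HasDerivAt f (f' x) x) (hf' : ∀ x, 0 ≤ f' x)
    (hbot : Tendsto f atBot (𝓝 m)) (htop : Tendsto f atTop (𝓝 n)) : Integrable f' := by
  have hneg : IntegrableOn (fun x => f' (-x)) (Ioi 0) :=
    integrableOn_Ioi_deriv_of_nonneg' (g := fun x => -f (-x))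
      (fun x _ => by
        have h := ((hderiv (-x)).scomp x (hasDerivAt_neg' x)).neg
        rwa [neg_smul, one_smul, neg_neg] at h)
      (fun x _ => hf' (-x)) (hbot.comp tendsto_neg_atTop_atBot).neg
  have hIic : IntegrableOn f' (Iic 0) := by
    rw [← (Measure.measurePreserving_neg (volume : Measure ℝ)).integrableOn_comp_preimage
      (Homeomorph.neg ℝ).measurableEmbedding]
    simp only [Function.comp_def, neg_preimage, neg_Iic, neg_zero]
    exact (integrableOn_Ici_iff_integrableOn_Ioi (by simp)).2 hneg
  rw [← integrableOn_univ, ← Iic_union_Ioi (a := 0)]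
  exact hIic.union
    (integrableOn_Ioi_deriv_of_nonneg' (fun x _ => hderiv x) (fun x _ => hf' x) htop)

theorem lintegral_ofReal_eq_tsum_of_hasSum {α : Type*} [MeasurableSpace α] {μ : Measure α}
    {F : ℕ → α → ℝ} {f : α → ℝ} (hF : ∀ n, AEMeasurable (F n) μ)
    (hF_nonneg : ∀ n, 0 ≤ᵐ[μ] F n) (hf : ∀ᵐ x ∂μ, HasSum (fun n => F n x) (f x)) :
    ∫⁻ x, ENNReal.ofReal (f x) ∂μ = ∑' n, ∫⁻ x, ENNReal.ofReal (F n x) ∂μ := by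
  rw [← lintegral_tsum fun n => (hF n).ennreal_ofReal]
  refine lintegral_congr_ae ?_
  filter_upwards [hf, ae_all_iff.2 hF_nonneg] with x hx h0
  rw [← hx.tsum_eq, ENNReal.ofReal_tsum_of_nonneg h0 hx.summable]

theorem lintegral_pow_mul_exp_neg_mul (k : ℕ) {r : ℝ} (hr : 0 < r) :
    ∫⁻ s in Ioi (0 : ℝ), ENNReal.ofReal (s ^ k * exp (-(r * s)))
      = ENNReal.ofReal (k ! / r ^ (k + 1)) := by
  have hint : ∫ s in Ioi (0 : ℝ), s ^ k * exp (-(r * s)) = k ! / r ^ (k + 1) := by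
    have h := integral_rpow_mul_exp_neg_mul_Ioi (a := k + 1) (by positivity) hr
    rw [add_sub_cancel_right, ← Nat.cast_succ] at h
    simp only [rpow_natCast] at h
    rw [Nat.cast_succ, Gamma_nat_eq_factorial] at h
    rw [h, Nat.succ_eq_add_one, one_div_pow, one_div_mul_eq_div]
  rw [← ofReal_integral_eq_lintegral_ofReal, hint]
  · exact Integrable.of_integral_ne_zero (by rw [hint]; positivity)
  · exact (ae_restrict_iff' measurableSet_Ioi).2 (ae_of_all _ fun s (hs : 0 < s) => by
      positivity)

lemma tsum_ofReal_div_succ_sq {c : ℝ} (hc : 0 ≤ c) :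
    ∑' n : ℕ, ENNReal.ofReal (c / (n + 1) ^ 2) = ENNReal.ofReal (c * (π ^ 2 / 6)) := by
  have h := (hasSum_nat_add_iff' (f := fun n : ℕ => c * (1 / (n : ℝ) ^ 2)) 1).2
    (hasSum_zeta_two.mul_left c)
  simp only [Finset.sum_range_one, Nat.cast_zero, zero_pow two_ne_zero, div_zero, sub_zero,
    Nat.cast_add, Nat.cast_one, mul_one_div] at h
  rw [← ENNReal.ofReal_tsum_of_nonneg (fun n => by positivity) h.summable, h.tsum_eq]

lemma hasSum_exp_neg_succ_mul {s : ℝ} (hs : 0 < s) :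
    HasSum (fun n : ℕ => exp (-((n + 1) * s))) (exp s - 1)⁻¹ := by
  have h := (hasSum_geometric_of_lt_one (exp_pos (-s)).le
    (exp_lt_one_iff.2 (neg_lt_zero.2 hs))).mul_left (exp (-s))
  have hsum : exp (-s) * (1 - exp (-s))⁻¹ = (exp s - 1)⁻¹ := by
    have : exp s - 1 ≠ 0 := sub_ne_zero.2 (one_lt_exp_iff.2 hs).ne'
    rw [exp_neg]
    field_simp
  refine hsum ▸ h.congr_fun fun n => ?_
  rw [← pow_succ', ← exp_nat_mul]
  push_cast
  ring_nf

lemma hasSum_succ_mul_exp_neg_succ_mul {s : ℝ} (hs : 0 < s) :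
    HasSum (fun n : ℕ => (n + 1) * exp (-((n + 1) * s))) (exp s / (exp s - 1) ^ 2) := by
  have hr : ‖exp (-s)‖ < 1 := by
    rw [norm_of_nonneg (exp_pos _).le]
    exact exp_lt_one_iff.2 (neg_lt_zero.2 hs)
  have h := (hasSum_nat_add_iff' (f := fun n : ℕ => (n : ℝ) * exp (-s) ^ n) 1).2
    (hasSum_coe_mul_geometric_of_norm_lt_one hr)
  have hsum : exp (-s) / (1 - exp (-s)) ^ 2 - ∑ i ∈ Finset.range 1, (i : ℝ) * exp (-s) ^ i
      = exp s / (exp s - 1) ^ 2 := by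
    have : exp s - 1 ≠ 0 := sub_ne_zero.2 (one_lt_exp_iff.2 hs).ne'
    rw [Finset.sum_range_one, Nat.cast_zero, zero_mul, sub_zero, exp_neg]
    field_simp
  rw [hsum] at h
  refine h.congr_fun fun n => ?_
  rw [← exp_nat_mul]
  push_cast
  ring_nf

lemma lintegral_div_exp_sub_one :
    ∫⁻ s in Ioi (0 : ℝ), ENNReal.ofReal (s / (exp s - 1)) = ENNReal.ofReal (π ^ 2 / 6) := by
  rw [lintegral_ofReal_eq_tsum_of_hasSum (F := fun n s => s ^ 1 * exp (-((n + 1) * s)))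
    (fun n => by fun_prop)
    (fun n => (ae_restrict_iff' measurableSet_Ioi).2 (ae_of_all _ fun s (hs : 0 < s) => by
      positivity))
    ((ae_restrict_iff' measurableSet_Ioi).2 (ae_of_all _ fun s hs => by
      simpa [div_eq_mul_inv] using (hasSum_exp_neg_succ_mul hs).mul_left s))]
  simp_rw [lintegral_pow_mul_exp_neg_mul 1 (Nat.cast_add_one_pos _)]
  simpa using tsum_ofReal_div_succ_sq zero_le_one

lemma lintegral_sq_mul_exp_div_exp_sub_one_sq :
    ∫⁻ s in Ioi (0 : ℝ), ENNReal.ofReal (s ^ 2 * exp s / (exp s - 1) ^ 2)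
      = ENNReal.ofReal (π ^ 2 / 3) := by
  rw [lintegral_ofReal_eq_tsum_of_hasSum
    (F := fun n s => (n + 1) * (s ^ 2 * exp (-((n + 1) * s))))
    (fun n => by fun_prop)
    (fun n => ae_of_all _ fun s => by positivity)
    ((ae_restrict_iff' measurableSet_Ioi).2 (ae_of_all _ fun s hs => by
      simp only [mul_div_assoc]
      exact ((hasSum_succ_mul_exp_neg_succ_mul hs).mul_left (s ^ 2)).congr_fun
        fun n => by ring))]
  have hterm (n : ℕ) :
      ∫⁻ s in Ioi (0 : ℝ), ENNReal.ofReal ((n + 1) * (s ^ 2 * exp (-((n + 1) * s))))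
        = ENNReal.ofReal (2 / (n + 1) ^ 2) := by
    simp_rw [ENNReal.ofReal_mul (Nat.cast_add_one_pos n).le]
    rw [lintegral_const_mul _ (by fun_prop),
      lintegral_pow_mul_exp_neg_mul 2 (Nat.cast_add_one_pos _),
      ← ENNReal.ofReal_mul (Nat.cast_add_one_pos n).le]
    congr 1
    field_simp
    norm_num
  simp_rw [hterm]
  rw [tsum_ofReal_div_succ_sq zero_le_two]
  congr 1
  ring

noncomputable section

def logisticPDF (x : ℝ) : ℝ := exp (-x) / (1 + exp (-x)) ^ 2

def logisticCDF (x : ℝ) : ℝ := (1 + exp (-x))⁻¹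

def logisticMeasure : Measure ℝ := volume.withDensity fun x => ENNReal.ofReal (logisticPDF x)

instance : SFinite logisticMeasure := by
  unfold logisticMeasure; infer_instance

lemma logisticPDF_nonneg (x : ℝ) : 0 ≤ logisticPDF x := by
  unfold logisticPDF; positivity

lemma measurable_logisticPDF : Measurable logisticPDF := by
  unfold logisticPDF; fun_prop

lemma hasDerivAt_logisticCDF (x : ℝ) : HasDerivAt logisticCDF (logisticPDF x) x := by
  have h : HasDerivAt (fun a => 1 + exp (-a)) (exp (-x) * -1) x :=
    (hasDerivAt_neg x).exp.const_add 1
  refine (h.inv (by positivity)).congr_deriv ?_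
  rw [logisticPDF]
  ring

lemma tendsto_logisticCDF_atTop : Tendsto logisticCDF atTop (𝓝 1) := by
  have h := ((tendsto_exp_atBot.comp tendsto_neg_atTop_atBot).const_add 1).inv₀ (by norm_num)
  show Tendsto (fun x => (1 + exp (-x))⁻¹) atTop (𝓝 1)
  simpa [Function.comp_def] using h

lemma logisticMeasure_Ioi (t : ℝ) :
    logisticMeasure (Ioi t) = ENNReal.ofReal (1 + exp t)⁻¹ := by
  have hderiv : ∀ x ∈ Ici t, HasDerivAt logisticCDF (logisticPDF x) x :=
    fun x _ => hasDerivAt_logisticCDF x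
  have hpos : ∀ x ∈ Ioi t, 0 ≤ logisticPDF x := fun x _ => logisticPDF_nonneg x
  rw [logisticMeasure, withDensity_apply _ measurableSet_Ioi,
    ← ofReal_integral_eq_lintegral_ofReal
      (integrableOn_Ioi_deriv_of_nonneg' hderiv hpos tendsto_logisticCDF_atTop)
      (ae_of_all _ logisticPDF_nonneg),
    integral_Ioi_of_hasDerivAt_of_nonneg' hderiv hpos tendsto_logisticCDF_atTop]
  congr 1
  rw [logisticCDF, exp_neg]
  field_simp
  ring

def logisticSumTail (s : ℝ) : ℝ := (s * exp s - exp s + 1) / (exp s - 1) ^ 2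

lemma logisticSumTail_nonneg (s : ℝ) : 0 ≤ logisticSumTail s := by
  have h : exp s * (1 - s) ≤ 1 := by
    have := mul_le_mul_of_nonneg_left (add_one_le_exp (-s)) (exp_pos s).le
    rwa [← exp_add, add_neg_cancel, exp_zero, neg_add_eq_sub] at this
  exact div_nonneg (by nlinarith) (sq_nonneg _)

def logisticConvPrimitive (s a : ℝ) : ℝ :=
  exp s / (exp s - 1) ^ 2 * log ((1 + exp a) / (exp a + exp s))
    + (exp s - 1)⁻¹ * (1 + exp a)⁻¹

lemma hasDerivAt_logisticConvPrimitive {s : ℝ} (hs : s ≠ 0) (a : ℝ) :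
    HasDerivAt (logisticConvPrimitive s) (logisticPDF a * (1 + exp (s - a))⁻¹) a := by
  have hs1 : exp s - 1 ≠ 0 := sub_ne_zero.2 (mt (exp_eq_one_iff s).1 hs)
  have hratio : HasDerivAt (fun a => (1 + exp a) / (exp a + exp s))
      ((exp a * (exp a + exp s) - (1 + exp a) * exp a) / (exp a + exp s) ^ 2) a :=
    ((hasDerivAt_exp a).const_add 1).div ((hasDerivAt_exp a).add_const _) (by positivity)
  have hinv := ((hasDerivAt_exp a).const_add 1).inv (by positivity : 1 + exp a ≠ 0)
  refine (((hratio.log (by positivity)).const_mul _).add (hinv.const_mul _)).congr_deriv ?_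
  rw [logisticPDF, exp_sub, exp_neg]
  field_simp
  ring

lemma tendsto_logisticConvPrimitive_atTop (s : ℝ) :
    Tendsto (logisticConvPrimitive s) atTop (𝓝 0) := by
  have hratio : Tendsto (fun a => (1 + exp a) / (exp a + exp s)) atTop (𝓝 1) := by
    have h : Tendsto (fun a => (exp a + exp s)⁻¹) atTop (𝓝 0) :=
      (tendsto_atTop_add_const_right _ _ tendsto_exp_atTop).inv_tendsto_atTop
    have h' := (h.const_mul (1 - exp s)).const_add 1
    rw [mul_zero, add_zero] at h'
    refine h'.congr fun a => ?_
    field_simp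
    ring
  have hinv : Tendsto (fun a => (1 + exp a)⁻¹) atTop (𝓝 0) :=
    (tendsto_atTop_add_const_left _ 1 tendsto_exp_atTop).inv_tendsto_atTop
  unfold logisticConvPrimitive
  simpa using ((hratio.log one_ne_zero).const_mul (exp s / (exp s - 1) ^ 2)).add
    (hinv.const_mul (exp s - 1)⁻¹)

lemma tendsto_logisticConvPrimitive_atBot (s : ℝ) :
    Tendsto (logisticConvPrimitive s) atBot
      (𝓝 (exp s / (exp s - 1) ^ 2 * (-s) + (exp s - 1)⁻¹)) := by
  have hcont : ContinuousAt (fun u => exp s / (exp s - 1) ^ 2 * log ((1 + u) / (u + exp s))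
      + (exp s - 1)⁻¹ * (1 + u)⁻¹) 0 := by
    fun_prop (disch := simp [(exp_pos s).ne'])
  unfold logisticConvPrimitive
  simpa [Function.comp_def, log_inv] using hcont.tendsto.comp tendsto_exp_atBot

lemma integrable_logisticPDF_mul_tail {s : ℝ} (hs : s ≠ 0) :
    Integrable fun a => logisticPDF a * (1 + exp (s - a))⁻¹ :=
  integrable_of_hasDerivAt_of_nonneg (hasDerivAt_logisticConvPrimitive hs)
    (fun a => by have := logisticPDF_nonneg a; positivity)
    (tendsto_logisticConvPrimitive_atBot s) (tendsto_logisticConvPrimitive_atTop s)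

lemma integral_logisticPDF_mul_tail {s : ℝ} (hs : s ≠ 0) :
    ∫ a, logisticPDF a * (1 + exp (s - a))⁻¹ = logisticSumTail s := by
  rw [integral_of_hasDerivAt_of_tendsto (hasDerivAt_logisticConvPrimitive hs)
    (integrable_logisticPDF_mul_tail hs)
    (tendsto_logisticConvPrimitive_atBot s) (tendsto_logisticConvPrimitive_atTop s)]
  have hs1 : exp s - 1 ≠ 0 := sub_ne_zero.2 (mt (exp_eq_one_iff s).1 hs)
  rw [logisticSumTail]
  field_simp
  ring

lemma logisticMeasure_prod_setOf_lt_add {s : ℝ} (hs : s ≠ 0) :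
    (logisticMeasure.prod logisticMeasure) {p | s < p.1 + p.2}
      = ENNReal.ofReal (logisticSumTail s) := by
  have hset : MeasurableSet {p : ℝ × ℝ | s < p.1 + p.2} :=
    measurableSet_lt measurable_const (measurable_fst.add measurable_snd)
  have hfiber (a : ℝ) : Prod.mk a ⁻¹' {p : ℝ × ℝ | s < p.1 + p.2} = Ioi (s - a) := by
    ext b; simp [sub_lt_iff_lt_add']
  simp_rw [Measure.prod_apply hset, hfiber, logisticMeasure_Ioi]
  rw [logisticMeasure,
    lintegral_withDensity_eq_lintegral_mul _ measurable_logisticPDF.ennreal_ofReal (by fun_prop)]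
  simp only [Pi.mul_apply, ← ENNReal.ofReal_mul (logisticPDF_nonneg _)]
  rw [← ofReal_integral_eq_lintegral_ofReal (integrable_logisticPDF_mul_tail hs)
    (ae_of_all _ fun a => by have := logisticPDF_nonneg a; positivity),
    integral_logisticPDF_mul_tail hs]

lemma integral_mul_logisticSumTail :
    ∫ s in Ioi (0 : ℝ), s * logisticSumTail s = π ^ 2 / 6 := by
  have hsplit : ∀ s ∈ Ioi (0 : ℝ), ENNReal.ofReal (s ^ 2 * exp s / (exp s - 1) ^ 2)
      = ENNReal.ofReal (s * logisticSumTail s) + ENNReal.ofReal (s / (exp s - 1)) := by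
    intro s (hs : 0 < s)
    have hs1 : 0 < exp s - 1 := sub_pos.2 (one_lt_exp_iff.2 hs)
    rw [← ENNReal.ofReal_add (mul_nonneg hs.le (logisticSumTail_nonneg s)) (by positivity),
      logisticSumTail]
    congr 1
    field_simp
    ring
  have hsum := lintegral_sq_mul_exp_div_exp_sub_one_sq
  rw [setLIntegral_congr_fun measurableSet_Ioi hsplit,
    lintegral_add_right _ (by fun_prop), lintegral_div_exp_sub_one] at hsum
  have hlint := ENNReal.eq_sub_of_add_eq ENNReal.ofReal_ne_top hsum
  rw [← ENNReal.ofReal_sub _ (by positivity), show π ^ 2 / 3 - π ^ 2 / 6 = π ^ 2 / 6 by ring]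
    at hlint
  rw [integral_eq_lintegral_of_nonneg_ae
    ((ae_restrict_iff' measurableSet_Ioi).2 (ae_of_all _ fun s (hs : 0 < s) =>
      mul_nonneg hs.le (logisticSumTail_nonneg s)))
    (by unfold logisticSumTail; fun_prop), hlint, ENNReal.toReal_ofReal (by positivity)]

end

theorem zeta_two_assignment_integral
    {Ω : Type*} [MeasureSpace Ω] [IsProbabilityMeasure (ℙ : Measure Ω)]
    (X₁ X₂ : Ω → ℝ) (hmeas₁ : Measurable X₁) (hmeas₂ : Measurable X₂)
    (hindep : IndepFun X₁ X₂ ℙ)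
    (hlaw₁ : Measure.map X₁ ℙ
      = volume.withDensity (fun x => ENNReal.ofReal
          (Real.exp (-x) / (1 + Real.exp (-x)) ^ 2)))
    (hlaw₂ : Measure.map X₂ ℙ
      = volume.withDensity (fun x => ENNReal.ofReal
          (Real.exp (-x) / (1 + Real.exp (-x)) ^ 2))) :
    (∫ x in Set.Ioi (0 : ℝ), x * (ℙ {ω | x < X₁ ω + X₂ ω}).toReal) = π ^ 2 / 6 := by
  have htail : ∀ s ∈ Ioi (0 : ℝ),
      s * (ℙ {ω | s < X₁ ω + X₂ ω}).toReal = s * logisticSumTail s := by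
    intro s (hs : 0 < s)
    rw [hindep.measure_setOf_lt_add hmeas₁ hmeas₂,
      show Measure.map X₁ ℙ = logisticMeasure from hlaw₁,
      show Measure.map X₂ ℙ = logisticMeasure from hlaw₂,
      logisticMeasure_prod_setOf_lt_add hs.ne', ENNReal.toReal_ofReal (logisticSumTail_nonneg s)]
  rw [setIntegral_congr_fun measurableSet_Ioi htail, integral_mul_logisticSumTail]
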